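/- Let H be a real Hilbert space, L self-adjoint nonnegative bounded linear, G self-adjoint nonpositive bounded linear. Suppose φⁿ, φⁿ⁺¹, μ ∈ H, rⁿ, rⁿ⁺¹ ∈ ℝ, b ∈ H, and Δt > 0 satisfy the Crank–Nicolson SAV scheme: (φⁿ⁺¹ − φⁿ)/Δt = Gμ, μ = (1/2) L(φⁿ⁺¹ + φⁿ) + ((rⁿ⁺¹ + rⁿ)/2) b, and rⁿ⁺¹ − rⁿ = (1/2)⟨b, φⁿ⁺¹ − φⁿ⟩. Then the modified energy Ẽ(φ, r) = (1/2)⟨φ, Lφ⟩ + r² satisfies the exact identity Ẽ(φⁿ⁺¹, rⁿ⁺¹) − Ẽ(φⁿ, rⁿ) = Δt ⟨μ, Gμ⟩, and hence Ẽ(φⁿ⁺¹, rⁿ⁺¹) ≤ Ẽ(φⁿ, rⁿ). -/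

import Mathlib

/-! The Crank–Nicolson average `½ L (φⁿ⁺¹ + φⁿ)` paired with the increment `φⁿ⁺¹ - φⁿ`
telescopes, by symmetry of `L`, into the exact difference of the quadratic energies, and the
scalar update `rⁿ⁺¹ - rⁿ = ½ ⟪b, φⁿ⁺¹ - φⁿ⟫` does the same for `r²`.  Hence the modified energy
changes by exactly `⟪μ, φⁿ⁺¹ - φⁿ⟫ = Δt ⟪μ, G μ⟫ ≤ 0`. -/

open RealInnerProductSpace

section

variable {H : Type*} [NormedAddCommGroup H] [InnerProductSpace ℝ H]

lemma LinearMap.IsSymmetric.inner_map_add_sub {T : H →ₗ[ℝ] H} (hT : T.IsSymmetric) (x y : H) :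
    ⟪T (x + y), x - y⟫ = ⟪x, T x⟫ - ⟪y, T y⟫ := by
  have hcross : ⟪T x, y⟫ = ⟪T y, x⟫ := by rw [hT, real_inner_comm]
  simp only [map_add, inner_add_left, inner_sub_right, hcross, real_inner_comm (T x) x,
    real_inner_comm (T y) y]
  ring

noncomputable def savEnergy (L : H →L[ℝ] H) (φ : H) (r : ℝ) : ℝ :=
  (1 / 2 : ℝ) * ⟪φ, L φ⟫ + r ^ 2

lemma savEnergy_sub_eq_inner {L : H →L[ℝ] H} (hL : (L : H →ₗ[ℝ] H).IsSymmetric)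
    {b φ₀ φ₁ μ : H} {r₀ r₁ : ℝ}
    (hμ : μ = (1 / 2 : ℝ) • L (φ₁ + φ₀) + ((r₁ + r₀) / 2) • b)
    (hr : r₁ - r₀ = (1 / 2 : ℝ) * ⟪b, φ₁ - φ₀⟫) :
    savEnergy L φ₁ r₁ - savEnergy L φ₀ r₀ = ⟪μ, φ₁ - φ₀⟫ := by
  have hquad : ⟪L (φ₁ + φ₀), φ₁ - φ₀⟫ = ⟪φ₁, L φ₁⟫ - ⟪φ₀, L φ₀⟫ := hL.inner_map_add_sub φ₁ φ₀
  have hb : ⟪b, φ₁ - φ₀⟫ = 2 * (r₁ - r₀) := by rw [hr]; ring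
  rw [hμ, inner_add_left, real_inner_smul_left, real_inner_smul_left, hquad, hb, savEnergy,
    savEnergy]
  ring

end

theorem sav_crank_nicolson_discrete_energy_law_general
    {H : Type*} [NormedAddCommGroup H] [InnerProductSpace ℝ H]
    (L G : H →L[ℝ] H)
    (hLsa : ∀ x y : H, ⟪L x, y⟫ = ⟪x, L y⟫)
    (hGneg : ∀ ψ : H, ⟪ψ, G ψ⟫ ≤ 0)
    (Δt : ℝ) (hΔt : 0 < Δt) (b : H) (φn φn1 μ : H) (rn rn1 : ℝ)
    (hscheme1 : φn1 - φn = Δt • G μ)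
    (hscheme2 : μ = (1 / 2 : ℝ) • L (φn1 + φn) + ((rn1 + rn) / 2) • b)
    (hscheme3 : rn1 - rn = (1 / 2 : ℝ) * ⟪b, φn1 - φn⟫) :
    ((1 / 2 : ℝ) * ⟪φn1, L φn1⟫ + rn1 ^ 2) - ((1 / 2 : ℝ) * ⟪φn, L φn⟫ + rn ^ 2)
      = Δt * ⟪μ, G μ⟫
    ∧ (1 / 2 : ℝ) * ⟪φn1, L φn1⟫ + rn1 ^ 2 ≤ (1 / 2 : ℝ) * ⟪φn, L φn⟫ + rn ^ 2 := by
  have henergy : savEnergy L φn1 rn1 - savEnergy L φn rn = Δt * ⟪μ, G μ⟫ := by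
    rw [savEnergy_sub_eq_inner hLsa hscheme2 hscheme3, hscheme1, real_inner_smul_right]
  have hdissipation : Δt * ⟪μ, G μ⟫ ≤ 0 := mul_nonpos_of_nonneg_of_nonpos hΔt.le (hGneg μ)
  exact ⟨henergy, sub_nonpos.mp (henergy ▸ hdissipation)⟩

theorem sav_crank_nicolson_discrete_energy_law
    {H : Type*} [NormedAddCommGroup H] [InnerProductSpace ℝ H] [CompleteSpace H]
    (L G : H →L[ℝ] H)
    (hLsa : ∀ x y : H, ⟪L x, y⟫ = ⟪x, L y⟫)
    (hLpos : ∀ ψ : H, 0 ≤ ⟪ψ, L ψ⟫)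
    (hGsa : ∀ x y : H, ⟪G x, y⟫ = ⟪x, G y⟫)
    (hGneg : ∀ ψ : H, ⟪ψ, G ψ⟫ ≤ 0)
    (Δt : ℝ) (hΔt : 0 < Δt) (b : H) (φn φn1 μ : H) (rn rn1 : ℝ)
    (hscheme1 : φn1 - φn = Δt • G μ)
    (hscheme2 : μ = (1 / 2 : ℝ) • L (φn1 + φn) + ((rn1 + rn) / 2) • b)
    (hscheme3 : rn1 - rn = (1 / 2 : ℝ) * ⟪b, φn1 - φn⟫) :
    ((1 / 2 : ℝ) * ⟪φn1, L φn1⟫ + rn1 ^ 2) - ((1 / 2 : ℝ) * ⟪φn, L φn⟫ + rn ^ 2)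
      = Δt * ⟪μ, G μ⟫
    ∧ (1 / 2 : ℝ) * ⟪φn1, L φn1⟫ + rn1 ^ 2 ≤ (1 / 2 : ℝ) * ⟪φn, L φn⟫ + rn ^ 2 :=
  sav_crank_nicolson_discrete_energy_law_general L G hLsa hGneg Δt hΔt b φn φn1 μ rn rn1 hscheme1
    hscheme2 hscheme3
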